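/- arXiv:1906.01114 — 2 statements merged into one kernel-verified Lean document; each statement's English description precedes it below -/
import Mathlib

section
/- Let P be a subset of the Euclidean plane and s, t ∈ P. Suppose (s*, t*) is a min-sum optimal pair: s*, t* ∈ P, segment ℝ s* t* ⊆ P, and for every p, q ∈ P with segment ℝ p q ⊆ P one has d_P(s, s*) + d_P(t, t*) ≤ d_P(s, p) + d_P(t, q). Suppose moreover that d_P(s, s*) < ∞, d_P(t, t*) < ∞, and that the segment from s* to t* is contained in the topological interior of P. Then s* = s and t* = t (so s and t are themselves mutually visible in P). Equivalently, unless s and t see each other, the segment joining any min-sum optimal pair at finite distance must meet the frontier of P. -/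
/-!
If `sStar ≠ s`, a nearly shortest path in `P` from `s` to `sStar` passes through points `p`
arbitrarily close to `sStar` with `geoDist P s p < geoDist P s sStar`: cutting the path at a
point at distance `r` from `sStar` saves at least `r` of its length. Since the
compact segment from `sStar` to `tStar` lies in the open set `interior P`, so does the segment
from any point near enough to `sStar` to `tStar`; hence the pair `(p, tStar)` is admissible and
beats `(sStar, tStar)`. The same argument applies to `tStar`.
-/

open scoped ENNReal

noncomputable abbrev E2 : Type := EuclideanSpace ℝ (Fin 2)

/-- The geodesic (intrinsic) distance in `P`: the infimum of path lengths
(`eVariationOn γ Set.univ`) over continuous paths `γ : [0,1] → E` staying in `P`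
from `x` to `y`; `∞` if no such finite-length path exists. -/
noncomputable def geoDist (P : Set E2) (x y : E2) : ℝ≥0∞ :=
  sInf { l : ℝ≥0∞ | ∃ γ : Set.Icc (0:ℝ) 1 → E2,
    Continuous γ ∧ Set.range γ ⊆ P ∧
    γ ⟨0, by norm_num⟩ = x ∧ γ ⟨1, by norm_num⟩ = y ∧
    eVariationOn γ Set.univ = l }

open Set unitInterval

lemma geoDist_le_eVariationOn {P : Set E2} {γ : I → E2} (hc : Continuous γ)
    (hr : range γ ⊆ P) : geoDist P (γ 0) (γ 1) ≤ eVariationOn γ univ :=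
  sInf_le ⟨γ, hc, hr, rfl, rfl, rfl⟩

lemma geoDist_add_edist_le_eVariationOn {P : Set E2} {γ : I → E2} (hc : Continuous γ)
    (hr : range γ ⊆ P) (u : I) :
    geoDist P (γ 0) (γ u) + edist (γ u) (γ 1) ≤ eVariationOn γ univ := by
  have initial : geoDist P (γ 0) (γ u) ≤ eVariationOn γ (Icc 0 u) :=
    calc geoDist P (γ 0) (γ u) = geoDist P ((γ ∘ (u * ·)) 0) ((γ ∘ (u * ·)) 1) := by
          simp only [Function.comp_apply, mul_zero, mul_one]
      _ ≤ eVariationOn (γ ∘ (u * ·)) univ :=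
          geoDist_le_eVariationOn (hc.comp (by fun_prop)) ((range_comp_subset_range _ _).trans hr)
      _ = eVariationOn γ ((u * ·) '' univ) :=
          eVariationOn.comp_eq_of_monotoneOn γ _ fun x _ y _ hxy => mul_le_mul_right hxy u
      _ ≤ eVariationOn γ (Icc 0 u) := eVariationOn.mono γ <| by
          rintro _ ⟨x, -, rfl⟩
          exact ⟨nonneg', mul_le_of_le_one_right' le_one'⟩
  have final : edist (γ u) (γ 1) ≤ eVariationOn γ (Icc u 1) :=
    eVariationOn.edist_le γ ⟨le_rfl, le_one'⟩ ⟨le_one', le_rfl⟩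
  calc _ ≤ eVariationOn γ (Icc 0 u) + eVariationOn γ (Icc u 1) := add_le_add initial final
    _ = eVariationOn γ (Icc 0 1) := by
        simpa only [univ_inter] using eVariationOn.Icc_add_Icc γ nonneg' le_one' (mem_univ u)
    _ ≤ eVariationOn γ univ := eVariationOn.mono γ (subset_univ _)

lemma exists_dist_lt_and_geoDist_lt {P : Set E2} {x y : E2} (hfin : geoDist P x y < ⊤)
    (hne : x ≠ y) {ε : ℝ} (hε : 0 < ε) :
    ∃ p ∈ P, dist p y < ε ∧ geoDist P x p < geoDist P x y := by
  obtain ⟨r, hr, hrε, hrxy⟩ : ∃ r, 0 < r ∧ r < ε ∧ r ≤ dist x y :=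
    ⟨min ε (dist x y) / 2, by positivity [dist_pos.mpr hne],
      by linarith [min_le_left ε (dist x y)],
      by linarith [min_le_right ε (dist x y), dist_nonneg (x := x) (y := y)]⟩
  obtain ⟨_, ⟨γ, hc, hrange, rfl, rfl, rfl⟩, hγ⟩ :=
    sInf_lt_iff.mp (ENNReal.lt_add_right hfin.ne (ENNReal.ofReal_pos.mpr hr).ne')
  obtain ⟨u, hu⟩ : ∃ u, dist (γ u) (γ 1) = r := by
    have : PreconnectedSpace I := Subtype.preconnectedSpace isPreconnected_Icc
    exact intermediate_value_univ 1 0 (hc.dist continuous_const) ⟨(dist_self _).trans_le hr.le, hrxy⟩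
  refine ⟨γ u, hrange (mem_range_self u), hu ▸ hrε, ?_⟩
  have := (geoDist_add_edist_le_eVariationOn hc hrange u).trans_lt hγ
  rwa [edist_dist, hu, ENNReal.add_lt_add_iff_right ENNReal.ofReal_ne_top] at this

lemma exists_pos_forall_dist_lt_segment_subset {E : Type*} [NormedAddCommGroup E]
    [NormedSpace ℝ E] {U : Set E} (hU : IsOpen U) {a b : E} (h : segment ℝ a b ⊆ U) :
    ∃ δ > 0, ∀ p, dist p a < δ → segment ℝ p b ⊆ U := by
  have hcompact : IsCompact (segment ℝ a b) :=
    segment_eq_image ℝ a b ▸ isCompact_Icc.image (by fun_prop)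
  obtain ⟨δ, hδ, hthick⟩ := hcompact.exists_thickening_subset_open hU h
  refine ⟨δ, hδ, fun p hp => ?_⟩
  rintro _ ⟨μ, ν, hμ, hν, hμν, rfl⟩
  refine hthick (Metric.mem_thickening_iff.mpr ⟨μ • a + ν • b, ⟨μ, ν, hμ, hν, hμν, rfl⟩, ?_⟩)
  calc dist (μ • p + ν • b) (μ • a + ν • b) = μ * dist p a := by
        rw [dist_add_right, dist_smul₀, Real.norm_of_nonneg hμ]
    _ ≤ dist p a := mul_le_of_le_one_left dist_nonneg (by linarith)
    _ < δ := hp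

lemma eq_of_segment_subset_interior_of_geoDist_le {P : Set E2} {s sStar tStar : E2}
    (hfin : geoDist P s sStar < ⊤) (hint : segment ℝ sStar tStar ⊆ interior P)
    (hopt : ∀ p ∈ P, segment ℝ p tStar ⊆ P → geoDist P s sStar ≤ geoDist P s p) :
    sStar = s := by
  by_contra hne
  obtain ⟨δ, hδ, hsees⟩ := exists_pos_forall_dist_lt_segment_subset isOpen_interior hint
  obtain ⟨p, hp, hpδ, hlt⟩ := exists_dist_lt_and_geoDist_lt hfin (Ne.symm hne) hδ
  exact (hopt p hp ((hsees p hpδ).trans interior_subset)).not_gt hlt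

theorem minsum_optimal_segment_meets_frontier_general (P : Set E2) (s t : E2)
    (sStar tStar : E2)
    (hsStar : sStar ∈ P) (htStar : tStar ∈ P)
    (hopt : ∀ p q : E2, p ∈ P → q ∈ P → segment ℝ p q ⊆ P →
      geoDist P s sStar + geoDist P t tStar ≤ geoDist P s p + geoDist P t q)
    (hsfin : geoDist P s sStar < ⊤) (htfin : geoDist P t tStar < ⊤)
    (hint : segment ℝ sStar tStar ⊆ interior P) :
    sStar = s ∧ tStar = t := by
  constructor
  · refine eq_of_segment_subset_interior_of_geoDist_le hsfin hint fun p hp hpt => ?_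
    exact (ENNReal.add_le_add_iff_right htfin.ne).mp (hopt p tStar hp htStar hpt)
  · rw [segment_symm] at hint
    refine eq_of_segment_subset_interior_of_geoDist_le htfin hint fun q hq hqs => ?_
    rw [segment_symm] at hqs
    exact (ENNReal.add_le_add_iff_left hsfin.ne).mp (hopt sStar q hsStar hq hqs)

/-- If a min-sum optimal pair (at finite geodesic distance) is joined by a segment
avoiding the frontier of `P` (i.e., lying in the interior of `P`), then the optimal
pair is `(s, t)` itself, so `s` and `t` see each other. -/
theorem minsum_optimal_segment_meets_frontier (P : Set E2) (s t : E2)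
    (hs : s ∈ P) (ht : t ∈ P) (sStar tStar : E2)
    (hsStar : sStar ∈ P) (htStar : tStar ∈ P)
    (hseg : segment ℝ sStar tStar ⊆ P)
    (hopt : ∀ p q : E2, p ∈ P → q ∈ P → segment ℝ p q ⊆ P →
      geoDist P s sStar + geoDist P t tStar ≤ geoDist P s p + geoDist P t q)
    (hsfin : geoDist P s sStar < ⊤) (htfin : geoDist P t tStar < ⊤)
    (hint : segment ℝ sStar tStar ⊆ interior P) :
    sStar = s ∧ tStar = t :=
  minsum_optimal_segment_meets_frontier_general P s t sStar tStar hsStar htStar hopt hsfin htfin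
    hint
end

section
/- Let P be a compact subset of the Euclidean plane. Then the geodesic distance function (x, y) ↦ d_P(x, y), taking values in ℝ≥0∞, is lower semicontinuous on P × P (with respect to the subspace topology of the product). -/
open scoped ENNReal

/-!
A path of length `< K` in `P` can be reparametrized by arc length into a `K`-Lipschitz map
`[0,1] → P` with the same endpoints. By Arzelà–Ascoli the `K`-Lipschitz maps into the compact
set `P` form a compact family, so the endpoint pairs they realize form a closed set `C K` lying
between `{d_P < K}` and `{d_P ≤ K}`. Hence `{d_P ≤ c} = ⋂_{K > c} C K` is closed.
-/

open Set
open scoped NNReal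

theorem ContinuousMap.isCompact_setOf_lipschitzWith_forall_mem {X Y : Type*}
    [PseudoEMetricSpace X] [PseudoEMetricSpace Y] {P : Set Y} (hP : IsCompact P) (K : ℝ≥0) :
    IsCompact {g : C(X, Y) | LipschitzWith K g ∧ ∀ x, g x ∈ P} := by
  refine ArzelaAscoli.isCompact_of_equicontinuous _ ?_
    (LipschitzWith.uniformEquicontinuous _ K fun g => g.2.1).equicontinuous
  have hfun : ContinuousMap.toFun '' {g : C(X, Y) | LipschitzWith K g ∧ ∀ x, g x ∈ P} =
      (univ.pi fun _ => P) ∩ {f | LipschitzWith K f} := by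
    ext f
    constructor
    · rintro ⟨g, hg, rfl⟩
      exact ⟨fun x _ => hg.2 x, hg.1⟩
    · rintro ⟨hfP, hf⟩
      exact ⟨⟨f, hf.continuous⟩, ⟨hf, fun x => hfP x trivial⟩, rfl⟩
  rw [hfun]
  exact (isCompact_univ_pi fun _ => hP).inter_right (isClosed_setOfPred_lipschitzWith K)

theorem LocallyBoundedVariationOn.continuousOn_variationOnFromTo {α E : Type*} [LinearOrder α]
    [TopologicalSpace α] [OrderTopology α] [PseudoMetricSpace E] {f : α → E} {s : Set α}
    (hbv : LocallyBoundedVariationOn f s) (hf : ContinuousOn f s) {a : α} (ha : a ∈ s) :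
    ContinuousOn (variationOnFromTo f s a) s := by
  intro b hb
  -- the one-sided jumps of the variation at `b` are those of `f`, here `dist (f b) (f b) = 0`
  have hleft : ContinuousWithinAt (variationOnFromTo f s a) (s ∩ Iio b) b := by
    simpa [ContinuousWithinAt] using
      variationOnFromTo.tendsto_left ha hb hbv ((hf b hb).mono inter_subset_left)
  have hright : ContinuousWithinAt (variationOnFromTo f s a) (s ∩ Ioi b) b := by
    simpa [ContinuousWithinAt] using
      variationOnFromTo.tendsto_right ha hb hbv ((hf b hb).mono inter_subset_left)
  refine (continuousWithinAt_insert_self.2 (hleft.union hright)).mono fun x hx => ?_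
  rcases lt_trichotomy x b with h | rfl | h
  exacts [Or.inr (Or.inl ⟨hx, h⟩), Or.inl rfl, Or.inr (Or.inr ⟨hx, h⟩)]

theorem LocallyBoundedVariationOn.variationOnFromTo_image_Icc {E : Type*} [PseudoMetricSpace E]
    {f : ℝ → E} {a b : ℝ} (hab : a ≤ b) (hbv : LocallyBoundedVariationOn f (Icc a b))
    (hf : ContinuousOn f (Icc a b)) :
    variationOnFromTo f (Icc a b) a '' Icc a b = Icc 0 (variationOnFromTo f (Icc a b) a b) := by
  have ha : a ∈ Icc a b := left_mem_Icc.2 hab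
  rw [(hbv.continuousOn_variationOnFromTo hf ha).image_Icc_of_monotoneOn hab
    (variationOnFromTo.monotoneOn hbv ha), variationOnFromTo.self]

theorem HasConstantSpeedOnWith.lipschitzOnWith {E : Type*} [PseudoEMetricSpace E] {f : ℝ → E}
    {s : Set ℝ} {l : ℝ≥0} (h : HasConstantSpeedOnWith f s l) : LipschitzOnWith l f s := by
  have hordered : ∀ x ∈ s, ∀ y ∈ s, x ≤ y → edist (f x) (f y) ≤ l * edist x y := by
    intro x hx y hy hxy
    calc edist (f x) (f y) ≤ eVariationOn f (s ∩ Icc x y) :=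
          eVariationOn.edist_le f ⟨hx, le_rfl, hxy⟩ ⟨hy, hxy, le_rfl⟩
      _ = ENNReal.ofReal (l * (y - x)) := h hx hy
      _ = l * edist x y := by
          rw [ENNReal.ofReal_mul l.coe_nonneg, ENNReal.ofReal_coe_nnreal, edist_comm, edist_dist,
            Real.dist_eq, abs_of_nonneg (sub_nonneg.2 hxy)]
  intro x hx y hy
  rcases le_total x y with hxy | hyx
  · exact hordered x hx y hy hxy
  · rw [edist_comm, edist_comm x]
    exact hordered y hy x hx hyx

theorem naturalParameterization_variationOnFromTo {α E : Type*} [LinearOrder α] [MetricSpace E]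
    {f : α → E} {s : Set α} (hbv : LocallyBoundedVariationOn f s) {a b : α} (ha : a ∈ s)
    (hb : b ∈ s) : naturalParameterization f s a (variationOnFromTo f s a b) = f b :=
  edist_eq_zero.1 (edist_naturalParameterization_eq_zero hbv ha hb)

theorem eVariationOn_IccExtend {α E : Type*} [LinearOrder α] [PseudoEMetricSpace E] {a b : α}
    (h : a ≤ b) (γ : Icc a b → E) :
    eVariationOn (IccExtend h γ) (Icc a b) = eVariationOn γ univ := by
  have := eVariationOn.comp_eq_of_monotoneOn (IccExtend h γ) ((↑) : Icc a b → α)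
    (t := univ) fun _ _ _ _ hxy => hxy
  rw [image_univ, Subtype.range_coe] at this
  rw [← this]
  exact congrArg (eVariationOn · univ) (funext (IccExtend_val h γ))

theorem LipschitzOnWith.eVariationOn_Icc_le {E : Type*} [PseudoEMetricSpace E] {f : ℝ → E}
    {K : ℝ≥0} {a b : ℝ} (hf : LipschitzOnWith K f (Icc a b)) :
    eVariationOn f (Icc a b) ≤ K * ENNReal.ofReal (b - a) := by
  rcases le_or_gt a b with hab | hba
  · calc eVariationOn f (Icc a b) = eVariationOn (f ∘ id) (Icc a b) := rfl
      _ ≤ K * eVariationOn id (Icc a b) := hf.comp_eVariationOn_le (mapsTo_id _)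
      _ = K * ENNReal.ofReal (b - a) := by
          congr 1
          simpa only [inter_self, id] using (monotone_id.monotoneOn (Icc a b)).eVariationOn_eq
            (left_mem_Icc.2 hab) (right_mem_Icc.2 hab)
  · rw [Icc_eq_empty hba.not_ge, eVariationOn.subsingleton f subsingleton_empty]
    exact zero_le

theorem LipschitzWith.eVariationOn_le {E : Type*} [PseudoEMetricSpace E] {K : ℝ≥0}
    {γ : unitInterval → E} (hγ : LipschitzWith K γ) : eVariationOn γ univ ≤ K := by
  rw [← eVariationOn_IccExtend zero_le_one]
  calc eVariationOn (IccExtend zero_le_one γ) (Icc 0 1) ≤ ↑(K * 1) * ENNReal.ofReal (1 - 0) :=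
        (hγ.comp (LipschitzWith.projIcc zero_le_one)).lipschitzOnWith.eVariationOn_Icc_le
    _ = K := by simp

theorem exists_lipschitzWith_reparam {E : Type*} [MetricSpace E] {γ : unitInterval → E}
    (hγ : Continuous γ) (hbv : eVariationOn γ univ ≠ ⊤) :
    ∃ δ : unitInterval → E, LipschitzWith (eVariationOn γ univ).toNNReal δ ∧
      range δ ⊆ range γ ∧ δ 0 = γ 0 ∧ δ 1 = γ 1 := by
  set K := (eVariationOn γ univ).toNNReal
  set f := IccExtend zero_le_one γ
  have hvar : eVariationOn f (Icc 0 1) = eVariationOn γ univ := eVariationOn_IccExtend _ γ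
  have hfbv : LocallyBoundedVariationOn f (Icc 0 1) := fun _ _ _ _ =>
    ne_top_of_le_ne_top (hvar ▸ hbv) (eVariationOn.mono f inter_subset_left)
  have h0 : (0 : ℝ) ∈ Icc 0 1 := left_mem_Icc.2 zero_le_one
  have hK : variationOnFromTo f (Icc 0 1) 0 1 = K := by
    rw [variationOnFromTo.eq_of_le f _ zero_le_one, inter_self, hvar]
    rfl
  have himage : variationOnFromTo f (Icc 0 1) 0 '' Icc 0 1 = Icc 0 (K : ℝ) := by
    rw [← hK]
    exact hfbv.variationOnFromTo_image_Icc zero_le_one hγ.Icc_extend'.continuousOn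
  set g := naturalParameterization f (Icc 0 1) 0
  have hg : LipschitzOnWith 1 g (Icc 0 (K : ℝ)) :=
    himage ▸ (has_unit_speed_naturalParameterization f hfbv h0).lipschitzOnWith
  have hgf : ∀ x ∈ Icc (0 : ℝ) 1, g (variationOnFromTo f (Icc 0 1) 0 x) = f x :=
    fun _ hx => naturalParameterization_variationOnFromTo hfbv h0 hx
  have hmaps : MapsTo ((K : ℝ) • ·) (Icc 0 1) (Icc 0 (K : ℝ)) := fun t ht =>
    ⟨mul_nonneg K.2 ht.1, mul_le_of_le_one_right K.2 ht.2⟩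
  refine ⟨fun t => g (K * t), ?_, ?_, ?_, ?_⟩
  · have := (hg.comp (lipschitzWith_smul (K : ℝ)).lipschitzOnWith hmaps).to_restrict
    rwa [NNReal.nnnorm_eq, one_mul] at this
  · rintro _ ⟨t, rfl⟩
    obtain ⟨x, hx, hxt⟩ := himage.symm ▸ hmaps t.2
    simp only [smul_eq_mul] at hxt
    show g (K * t) ∈ range γ
    rw [← hxt, hgf x hx]
    exact mem_range_self _
  · simp only [Set.Icc.coe_zero, mul_zero]
    rw [← variationOnFromTo.self f (Icc 0 1) 0, hgf 0 h0]
    exact IccExtend_left zero_le_one γ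
  · simp only [Set.Icc.coe_one, mul_one]
    rw [← hK, hgf 1 (right_mem_Icc.2 zero_le_one)]
    exact IccExtend_right zero_le_one γ

theorem geoDist_le_of_lipschitzWith {P : Set E2} {K : ℝ≥0} {g : unitInterval → E2}
    (hg : LipschitzWith K g) (hgP : range g ⊆ P) : geoDist P (g 0) (g 1) ≤ K :=
  calc geoDist P (g 0) (g 1) ≤ eVariationOn g univ :=
        sInf_le ⟨g, hg.continuous, hgP, rfl, rfl, rfl⟩
    _ ≤ K := hg.eVariationOn_le

theorem exists_lipschitzWith_of_geoDist_lt {P : Set E2} {x y : E2} {K : ℝ≥0}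
    (h : geoDist P x y < K) : ∃ g : C(unitInterval, E2),
      LipschitzWith K g ∧ (∀ t, g t ∈ P) ∧ g 0 = x ∧ g 1 = y := by
  obtain ⟨_, ⟨γ, hγ, hγP, rfl, rfl, rfl⟩, hlt⟩ := sInf_lt_iff.1 h
  obtain ⟨δ, hδ, hδγ, h0, h1⟩ := exists_lipschitzWith_reparam hγ hlt.ne_top
  have hδK : LipschitzWith K δ :=
    hδ.weaken (by simpa using ENNReal.toNNReal_mono ENNReal.coe_ne_top hlt.le)
  exact ⟨⟨δ, hδK.continuous⟩, hδK, fun t => hγP (hδγ (mem_range_self t)), h0, h1⟩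

theorem lowerSemicontinuous_geoDist {P : Set E2} (hP : IsCompact P) :
    LowerSemicontinuous fun p : E2 × E2 => geoDist P p.1 p.2 := by
  refine lowerSemicontinuous_iff_isClosed_preimage.2 fun c => ?_
  set joinable : ℝ≥0 → Set (E2 × E2) := fun K =>
    (fun g : C(unitInterval, E2) => (g 0, g 1)) '' {g | LipschitzWith K g ∧ ∀ t, g t ∈ P}
  have hsublevel : (fun p : E2 × E2 => geoDist P p.1 p.2) ⁻¹' Iic c =
      ⋂ (K : ℝ≥0) (_ : c < K), joinable K := by
    ext p
    simp only [mem_preimage, mem_Iic, mem_iInter]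
    constructor
    · intro hp K hK
      obtain ⟨g, hgK, hgP, h0, h1⟩ := exists_lipschitzWith_of_geoDist_lt (hp.trans_lt hK)
      exact ⟨g, ⟨hgK, hgP⟩, Prod.ext h0 h1⟩
    · intro hp
      by_contra! hlt
      obtain ⟨K, hcK, hKp⟩ := ENNReal.lt_iff_exists_nnreal_btwn.1 hlt
      obtain ⟨g, ⟨hgK, hgP⟩, rfl⟩ := hp K hcK
      exact hKp.not_ge (geoDist_le_of_lipschitzWith hgK (range_subset_iff.2 hgP))
  rw [hsublevel]
  exact isClosed_biInter fun K _ =>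
    ((ContinuousMap.isCompact_setOf_lipschitzWith_forall_mem hP K).image
      ((continuous_eval_const 0).prodMk (continuous_eval_const 1))).isClosed

/-- On a compact planar set `P`, the geodesic distance is lower semicontinuous
on `P × P` (with the subspace topology of the product). -/
theorem geoDist_lowerSemicontinuous (P : Set E2) (hP : IsCompact P) :
    LowerSemicontinuous (fun xy : P × P => geoDist P (xy.1 : E2) (xy.2 : E2)) :=
  (lowerSemicontinuous_geoDist hP).comp (continuous_subtype_val.prodMap continuous_subtype_val)
end
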